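/- arXiv:1605.00035 — 2 statements merged into one kernel-verified Lean document; each statement's English description precedes it below -/
import Mathlib

section
/- Let Ω = (−L, L) × (−h, h) be a rectangle with boundary ∂Ω = Γ₁ ∪ Γ₂, where Γ₁ consists of the top and left sides and Γ₂ of the bottom and right sides. Let f : ∂Ω → ℝ be continuous with f strictly monotone along Γ₁ and along Γ₂ (with respect to arclength), attaining each value in (min f, max f) exactly once on each Γᵢ. For t ∈ (min f, max f), let ℓ^t be the segment joining the point x^t ∈ Γ₁ with f(x^t) = t to the point y^t ∈ Γ₂ with f(y^t) = t. Then for every z ∈ Ω there exists a unique t such that z ∈ ℓ^t. -/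
open MeasureTheory Set Filter Metric Bornology
open scoped ENNReal symmDiff Topology

noncomputable section

abbrev E2 := EuclideanSpace ℝ (Fin 2)

/-!
Reparametrize `Γ₁` and `Γ₂` by the level of `f`: this gives continuous `X`, `Y` with
`f (X t) = f (Y t) = t`, so that `ℓᵗ = [X t, Y t]`.

Existence: the signed area `cross (Y t - X t) (z - X t)` is continuous in `t`, and it has opposite
signs near the two ends, where `X t` and `Y t` approach the corners `(-L, -h)` and `(L, h)` along
the two different sides meeting there. At a zero, `z` lies on the line through `X t` and `Y t`;
since a line through an interior point of a convex set meets its boundary at most once on each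
side of that point, `z` lies between `X t` and `Y t`.

Uniqueness: if `z ∈ ℓˢ ∩ ℓᵗ` with `s < t`, the endpoints of `ℓᵗ` lie strictly on opposite sides of
the line of `ℓˢ`, and the boundary arc of levels `≥ t` joins them. So the arc crosses that line,
but the line meets the boundary only at the endpoints of `ℓˢ`, whose level is `s < t`.
-/

theorem IsCompact.continuousOn_of_invOn {X Y : Type*} [TopologicalSpace X] [TopologicalSpace Y]
    [T2Space Y] {s : Set X} {t : Set Y} {φ : X → Y} {ψ : Y → X} (hs : IsCompact s)
    (hφ : ContinuousOn φ s) (hψ : MapsTo ψ t s) (hinv : InvOn ψ φ s t) : ContinuousOn ψ t := by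
  rw [continuousOn_iff_isClosed]
  intro C hC
  refine ⟨φ '' (s ∩ C), ((hs.inter_right hC).image_of_continuousOn
    (hφ.mono inter_subset_left)).isClosed, ?_⟩
  ext y
  constructor
  · rintro ⟨hyC, hyt⟩
    exact ⟨⟨ψ y, ⟨hψ hyt, hyC⟩, hinv.2 hyt⟩, hyt⟩
  · rintro ⟨⟨x, ⟨hxs, hxC⟩, rfl⟩, hyt⟩
    exact ⟨by rwa [mem_preimage, hinv.1 hxs], hyt⟩

theorem StrictMonoOn.exists_continuousOn_invOn {φ : ℝ → ℝ} {a b : ℝ} (hab : a ≤ b)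
    (hc : ContinuousOn φ (Icc a b)) (hm : StrictMonoOn φ (Icc a b)) :
    ∃ ψ : ℝ → ℝ, ContinuousOn ψ (Icc (φ a) (φ b)) ∧ BijOn ψ (Icc (φ a) (φ b)) (Icc a b) ∧
      InvOn ψ φ (Icc a b) (Icc (φ a) (φ b)) := by
  have hsurj : SurjOn φ (Icc a b) (Icc (φ a) (φ b)) :=
    (hc.image_Icc_of_monotoneOn hab hm.monotoneOn).symm.subset
  have hmaps : MapsTo φ (Icc a b) (Icc (φ a) (φ b)) := fun x hx =>
    ⟨hm.monotoneOn (left_mem_Icc.2 hab) hx hx.1, hm.monotoneOn hx (right_mem_Icc.2 hab) hx.2⟩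
  have hinv : InvOn (Function.invFunOn φ (Icc a b)) φ (Icc a b) (Icc (φ a) (φ b)) :=
    ⟨hm.injOn.leftInvOn_invFunOn, hsurj.rightInvOn_invFunOn⟩
  exact ⟨_, isCompact_Icc.continuousOn_of_invOn hc hsurj.mapsTo_invFunOn hinv,
    hinv.symm.bijOn hsurj.mapsTo_invFunOn hmaps, hinv⟩

theorem exists_reparametrization_by_level {E : Type*} [TopologicalSpace E] {γ : ℝ → E}
    {f : E → ℝ} {a b : ℝ} (hab : a ≤ b) (hγ : ContinuousOn γ (Icc a b))
    (hf : ContinuousOn f (γ '' Icc a b)) (hm : StrictMonoOn (f ∘ γ) (Icc a b)) :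
    ∃ X : ℝ → E, ContinuousOn X (Icc (f (γ a)) (f (γ b))) ∧
      X '' Icc (f (γ a)) (f (γ b)) = γ '' Icc a b ∧
      (∀ t ∈ Icc (f (γ a)) (f (γ b)), f (X t) = t) ∧ X (f (γ a)) = γ a ∧ X (f (γ b)) = γ b := by
  obtain ⟨ψ, hψc, hψ, hψinv⟩ := hm.exists_continuousOn_invOn hab (hf.comp hγ (mapsTo_image γ _))
  exact ⟨γ ∘ ψ, hγ.comp hψc hψ.mapsTo, (image_comp γ ψ _).trans (congrArg _ hψ.image_eq),
    fun t ht => hψinv.2 ht, congrArg γ (hψinv.1 (left_mem_Icc.2 hab)),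
    congrArg γ (hψinv.1 (right_mem_Icc.2 hab))⟩

section Convex

variable {𝕜 E : Type*} [Field 𝕜] [LinearOrder 𝕜] [IsStrictOrderedRing 𝕜] [AddCommGroup E]
  [Module 𝕜 E] [TopologicalSpace E] [IsTopologicalAddGroup E] [ContinuousConstSMul 𝕜 E]
  {K : Set E} {z v p q w : E}

theorem Convex.eq_of_add_smul_notMem_interior (hK : Convex 𝕜 K) (hz : z ∈ interior K)
    {a b : 𝕜} (ha : 0 < a) (hb : 0 < b) (haK : z + a • v ∈ K \ interior K)
    (hbK : z + b • v ∈ K \ interior K) : a = b := by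
  have key : ∀ {a b : 𝕜}, 0 < a → a < b → z + b • v ∈ K → z + a • v ∈ interior K := by
    intro a b ha hab hbK
    apply hK.openSegment_interior_self_subset_interior hz hbK
    rw [openSegment_eq_image']
    refine ⟨a / b, ⟨div_pos ha (ha.trans hab), (div_lt_one (ha.trans hab)).2 hab⟩, ?_⟩
    dsimp only
    rw [add_sub_cancel_left, smul_smul, div_mul_cancel₀ _ (ha.trans hab).ne']
  rcases lt_trichotomy a b with h | h | h
  · exact absurd (key ha h hbK.1) haK.2
  · exact h
  · exact absurd (key hb h haK.1) hbK.2

theorem Convex.mem_openSegment_of_notMem_interior (hK : Convex 𝕜 K) (hz : z ∈ interior K)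
    (hp : p ∈ K \ interior K) (hq : q ∈ K \ interior K) {α : 𝕜} (hzpq : z = p + α • (q - p)) :
    z ∈ openSegment 𝕜 p q := by
  rw [openSegment_eq_image']
  refine ⟨α, ⟨?_, ?_⟩, hzpq.symm⟩
  · rcases lt_trichotomy α 0 with h | rfl | h
    · have := hK.eq_of_add_smul_notMem_interior hz (neg_pos.2 h) (by linarith : (0 : 𝕜) < 1 - α)
        (v := q - p) (by convert hp using 1; rw [hzpq]; module)
        (by convert hq using 1; rw [hzpq]; module)
      linarith
    · exact absurd (by simpa [hzpq] using hz) hp.2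
    · exact h
  · rcases lt_trichotomy α 1 with h | rfl | h
    · exact h
    · exact absurd (by simpa [hzpq] using hz) hq.2
    · have := hK.eq_of_add_smul_notMem_interior hz (by linarith : (0 : 𝕜) < α)
        (by linarith : (0 : 𝕜) < α - 1) (v := p - q)
        (by convert hp using 1; rw [hzpq]; module) (by convert hq using 1; rw [hzpq]; module)
      linarith

theorem Convex.eq_or_eq_of_notMem_interior (hK : Convex 𝕜 K) (hz : z ∈ interior K)
    (hp : p ∈ K \ interior K) (hq : q ∈ K \ interior K) (hzpq : z ∈ segment 𝕜 p q)
    (hw : w ∈ K \ interior K) {α : 𝕜} (hwpq : w = p + α • (q - p)) : w = p ∨ w = q := by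
  rw [segment_eq_image'] at hzpq
  obtain ⟨l, ⟨hl0, hl1⟩, rfl⟩ := hzpq
  have hl0 : 0 < l := hl0.lt_of_ne (by rintro rfl; exact hp.2 (by simpa using hz))
  have hl1 : l < 1 := hl1.lt_of_ne (by rintro rfl; exact hq.2 (by simpa using hz))
  rcases lt_trichotomy α l with h | rfl | h
  · have := hK.eq_of_add_smul_notMem_interior hz (by linarith : (0 : 𝕜) < l - α) hl0
      (v := p - q) (by convert hw using 1; rw [hwpq]; module) (by convert hp using 1; module)
    left
    rw [hwpq, show α = 0 by linarith, zero_smul, add_zero]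
  · exact absurd (hwpq ▸ hz) hw.2
  · have := hK.eq_of_add_smul_notMem_interior hz (by linarith : (0 : 𝕜) < α - l)
      (by linarith : (0 : 𝕜) < 1 - l) (v := q - p)
      (by convert hw using 1; rw [hwpq]; module) (by convert hq using 1; module)
    right
    rw [hwpq, show α = 1 by linarith, one_smul, add_sub_cancel]

end Convex

def cross (u v : E2) : ℝ := u 0 * v 1 - u 1 * v 0

theorem continuous_cross : Continuous fun x : E2 × E2 => cross x.1 x.2 := by
  unfold cross
  fun_prop

theorem exists_eq_smul_of_cross_eq_zero {u v : E2} (hu : u ≠ 0) (h : cross u v = 0) :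
    ∃ α : ℝ, v = α • u := by
  have hsmul : ∀ α : ℝ, v 0 = α * u 0 → v 1 = α * u 1 → v = α • u := fun α h0 h1 => by
    ext i; fin_cases i <;> simp [h0, h1]
  unfold cross at h
  by_cases h0 : u 0 = 0
  · have h1 : u 1 ≠ 0 := fun h1 => hu (by ext i; fin_cases i <;> simp [h0, h1])
    refine ⟨v 1 / u 1, hsmul _ ?_ (by field_simp)⟩
    field_simp
    linear_combination -h
  · refine ⟨v 0 / u 0, hsmul _ (by field_simp) ?_⟩
    field_simp
    linear_combination h

theorem cross_sub_mem_segment (d o : E2) {x y z : E2} (hz : z ∈ segment ℝ x y) :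
    cross d (z - o) ∈ segment ℝ (cross d (x - o)) (cross d (y - o)) := by
  obtain ⟨μ, ν, hμ, hν, hμν, rfl⟩ := hz
  refine ⟨μ, ν, hμ, hν, hμν, ?_⟩
  simp only [cross, PiLp.add_apply, PiLp.sub_apply, PiLp.smul_apply, smul_eq_mul]
  linear_combination (d 1 * o 0 - d 0 * o 1) * hμν

def rectOpen (L h : ℝ) : Set E2 := {p | |p 0| < L ∧ |p 1| < h}

def rectClosed (L h : ℝ) : Set E2 := {p | |p 0| ≤ L ∧ |p 1| ≤ h}

def topLeftSides (L h : ℝ) : Set E2 := {p | (p 1 = h ∧ |p 0| ≤ L) ∨ (p 0 = -L ∧ |p 1| ≤ h)}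

def bottomRightSides (L h : ℝ) : Set E2 := {p | (p 1 = -h ∧ |p 0| ≤ L) ∨ (p 0 = L ∧ |p 1| ≤ h)}

theorem rectClosed_eq_preimage (L h : ℝ) :
    rectClosed L h = (fun p : E2 => p 0) ⁻¹' Icc (-L) L ∩ (fun p : E2 => p 1) ⁻¹' Icc (-h) h := by
  ext p
  simp [rectClosed, abs_le]

theorem convex_rectClosed (L h : ℝ) : Convex ℝ (rectClosed L h) := by
  rw [rectClosed_eq_preimage]
  exact ((convex_Icc _ _).linear_preimage (EuclideanSpace.proj 0 : E2 →L[ℝ] ℝ).toLinearMap).inter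
    ((convex_Icc _ _).linear_preimage (EuclideanSpace.proj 1 : E2 →L[ℝ] ℝ).toLinearMap)

theorem interior_rectClosed (L h : ℝ) : interior (rectClosed L h) = rectOpen L h := by
  have hopen : ∀ i : Fin 2, IsOpenMap fun p : E2 => p i := fun i =>
    (EuclideanSpace.proj i : E2 →L[ℝ] ℝ).isOpenMap fun r => ⟨EuclideanSpace.single i r, by simp⟩
  rw [rectClosed_eq_preimage, interior_inter,
    ← (hopen 0).preimage_interior_eq_interior_preimage (by fun_prop),
    ← (hopen 1).preimage_interior_eq_interior_preimage (by fun_prop), interior_Icc, interior_Icc]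
  ext p
  simp [rectOpen, abs_lt]

section Rectangle

variable {L h : ℝ}

theorem topLeftSides_subset (hL : 0 ≤ L) (hh : 0 ≤ h) :
    topLeftSides L h ⊆ rectClosed L h \ interior (rectClosed L h) := by
  rw [interior_rectClosed]
  rintro p (⟨hp1, hp0⟩ | ⟨hp0, hp1⟩) <;>
    simp [rectClosed, rectOpen, hp0, hp1, abs_of_nonneg, hL, hh]

theorem bottomRightSides_subset (hL : 0 ≤ L) (hh : 0 ≤ h) :
    bottomRightSides L h ⊆ rectClosed L h \ interior (rectClosed L h) := by
  rw [interior_rectClosed]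
  rintro p (⟨hp1, hp0⟩ | ⟨hp0, hp1⟩) <;>
    simp [rectClosed, rectOpen, hp0, hp1, abs_of_nonneg, hL, hh]

theorem eq_corner_of_mem_inter (hL : 0 < L) (hh : 0 < h) {p : E2}
    (hp : p ∈ topLeftSides L h ∩ bottomRightSides L h) : p = !₂[-L, -h] ∨ p = !₂[L, h] := by
  obtain ⟨⟨h1, -⟩ | ⟨h0, -⟩, ⟨h1', -⟩ | ⟨h0', -⟩⟩ := hp
  · linarith
  · right; ext i; fin_cases i <;> simp [h0', h1]
  · left; ext i; fin_cases i <;> simp [h0, h1']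
  · linarith

variable {z X Y : E2}

theorem cross_pos_near_bottomLeft (hz : z ∈ rectOpen L h)
    (hX : X ∈ topLeftSides L h \ bottomRightSides L h)
    (hY : Y ∈ bottomRightSides L h \ topLeftSides L h) (hXz : X 1 < z 1) (hYz : Y 0 < z 0) :
    0 < cross (Y - X) (z - X) := by
  have hz0 := abs_lt.1 hz.1
  have hz1 := abs_lt.1 hz.2
  obtain ⟨⟨hX1, -⟩ | ⟨hX0, hX1⟩, hXb⟩ := hX
  · linarith
  obtain ⟨⟨hY1, hY0⟩ | ⟨hY0, -⟩, hYt⟩ := hY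
  swap
  · linarith
  have hX1' : -h < X 1 := (abs_le.1 hX1).1.lt_of_ne fun e =>
    hXb (.inl ⟨e.symm, by rw [hX0, abs_neg, abs_of_nonneg (by linarith)]⟩)
  have hY0' : -L < Y 0 := (abs_le.1 hY0).1.lt_of_ne fun e =>
    hYt (.inr ⟨e.symm, by rw [hY1, abs_neg, abs_of_nonneg (by linarith)]⟩)
  simp only [cross, PiLp.sub_apply, hX0, hY1]
  nlinarith [mul_pos (by linarith : 0 < Y 0 + L) (by linarith : 0 < z 1 - X 1),
    mul_pos (by linarith : 0 < h + X 1) (by linarith : 0 < z 0 + L)]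

theorem cross_neg_near_topRight (hz : z ∈ rectOpen L h)
    (hX : X ∈ topLeftSides L h \ bottomRightSides L h)
    (hY : Y ∈ bottomRightSides L h \ topLeftSides L h) (hXz : z 0 < X 0) (hYz : z 1 < Y 1) :
    cross (Y - X) (z - X) < 0 := by
  have hz0 := abs_lt.1 hz.1
  have hz1 := abs_lt.1 hz.2
  obtain ⟨⟨hX1, hX0⟩ | ⟨hX0, -⟩, hXb⟩ := hX
  swap
  · linarith
  obtain ⟨⟨hY1, -⟩ | ⟨hY0, hY1⟩, hYt⟩ := hY
  · linarith
  have hX0' : X 0 < L := (abs_le.1 hX0).2.lt_of_ne fun e =>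
    hXb (.inr ⟨e, by rw [hX1, abs_of_nonneg (by linarith)]⟩)
  have hY1' : Y 1 < h := (abs_le.1 hY1).2.lt_of_ne fun e =>
    hYt (.inl ⟨e, by rw [hY0, abs_of_nonneg (by linarith)]⟩)
  simp only [cross, PiLp.sub_apply, hX1, hY0]
  nlinarith [mul_pos (by linarith : 0 < L - X 0) (by linarith : 0 < h - z 1),
    mul_pos (by linarith : 0 < h - Y 1) (by linarith : 0 < X 0 - z 0)]

end Rectangle

theorem exists_mem_Ioo_of_eventually {a b e : ℝ} (hab : a < b) (he : e ∈ Icc a b)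
    {p : ℝ → Prop} (hp : ∀ᶠ t in 𝓝[Icc a b] e, p t) : ∃ t ∈ Ioo a b, p t := by
  have : (𝓝[Ioo a b] e).NeBot := mem_closure_iff_nhdsWithin_neBot.1 (by rwa [closure_Ioo hab.ne])
  obtain ⟨t, hpt, ht⟩ :=
    ((hp.filter_mono (nhdsWithin_mono e Ioo_subset_Icc_self)).and self_mem_nhdsWithin).exists
  exact ⟨t, ht, hpt⟩

/-- The chord `ℓᵗ` of the paper is `segment ℝ (X t) (Y t)`. -/
structure LevelParametrization (L h a b : ℝ) (f : E2 → ℝ) (X Y : ℝ → E2) : Prop where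
  lt : a < b
  continuousOn_left : ContinuousOn X (Icc a b)
  continuousOn_right : ContinuousOn Y (Icc a b)
  image_left : X '' Icc a b = topLeftSides L h
  image_right : Y '' Icc a b = bottomRightSides L h
  level_left : ∀ t ∈ Icc a b, f (X t) = t
  level_right : ∀ t ∈ Icc a b, f (Y t) = t
  start : X a = Y a
  finish : X b = Y b

namespace LevelParametrization

variable {L h a b : ℝ} {f : E2 → ℝ} {X Y : ℝ → E2} {z : E2}

theorem mem_left (P : LevelParametrization L h a b f X Y) {t : ℝ} (ht : t ∈ Icc a b) :
    X t ∈ topLeftSides L h :=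
  P.image_left ▸ mem_image_of_mem X ht

theorem mem_right (P : LevelParametrization L h a b f X Y) {t : ℝ} (ht : t ∈ Icc a b) :
    Y t ∈ bottomRightSides L h :=
  P.image_right ▸ mem_image_of_mem Y ht

theorem start_mem_inter (P : LevelParametrization L h a b f X Y) :
    X a ∈ topLeftSides L h ∩ bottomRightSides L h :=
  ⟨P.mem_left (left_mem_Icc.2 P.lt.le), P.start ▸ P.mem_right (left_mem_Icc.2 P.lt.le)⟩

theorem finish_mem_inter (P : LevelParametrization L h a b f X Y) :
    X b ∈ topLeftSides L h ∩ bottomRightSides L h :=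
  ⟨P.mem_left (right_mem_Icc.2 P.lt.le), P.finish ▸ P.mem_right (right_mem_Icc.2 P.lt.le)⟩

theorem corners (P : LevelParametrization L h a b f X Y) (hL : 0 < L) (hh : 0 < h) :
    (X a = !₂[-L, -h] ∧ X b = !₂[L, h]) ∨ (X a = !₂[L, h] ∧ X b = !₂[-L, -h]) := by
  have hab : X a ≠ X b := fun hab => P.lt.ne <| by
    rw [← P.level_left a (left_mem_Icc.2 P.lt.le), hab, P.level_left b (right_mem_Icc.2 P.lt.le)]
  rcases eq_corner_of_mem_inter hL hh P.start_mem_inter with ha | ha <;>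
    rcases eq_corner_of_mem_inter hL hh P.finish_mem_inter with hb | hb <;>
    simp_all

theorem notMem_inter (P : LevelParametrization L h a b f X Y) (hL : 0 < L) (hh : 0 < h)
    {p : E2} (hp : f p ∈ Ioo a b) : p ∉ topLeftSides L h ∩ bottomRightSides L h := by
  intro hpi
  have hX : p = X a ∨ p = X b := by
    rcases P.corners hL hh with ⟨ha, hb⟩ | ⟨ha, hb⟩ <;>
      rcases eq_corner_of_mem_inter hL hh hpi with hp | hp <;> simp_all
  rcases hX with rfl | rfl
  · exact hp.1.ne' (P.level_left a (left_mem_Icc.2 P.lt.le))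
  · exact hp.2.ne (P.level_left b (right_mem_Icc.2 P.lt.le))

theorem mem_diff (P : LevelParametrization L h a b f X Y) (hL : 0 < L) (hh : 0 < h)
    {t : ℝ} (ht : t ∈ Ioo a b) :
    X t ∈ topLeftSides L h \ bottomRightSides L h ∧
      Y t ∈ bottomRightSides L h \ topLeftSides L h := by
  have hX := P.mem_left (Ioo_subset_Icc_self ht)
  have hY := P.mem_right (Ioo_subset_Icc_self ht)
  refine ⟨⟨hX, fun hX' => P.notMem_inter hL hh ?_ ⟨hX, hX'⟩⟩,
    ⟨hY, fun hY' => P.notMem_inter hL hh ?_ ⟨hY', hY⟩⟩⟩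
  · rwa [P.level_left t (Ioo_subset_Icc_self ht)]
  · rwa [P.level_right t (Ioo_subset_Icc_self ht)]

theorem sub_ne_zero_of_mem_Ioo (P : LevelParametrization L h a b f X Y) (hL : 0 < L)
    (hh : 0 < h) {t : ℝ} (ht : t ∈ Ioo a b) : Y t - X t ≠ 0 :=
  sub_ne_zero.2 fun e => (P.mem_diff hL hh ht).1.2 (e ▸ (P.mem_diff hL hh ht).2.1)

theorem mem_boundary_left (P : LevelParametrization L h a b f X Y) (hL : 0 < L) (hh : 0 < h)
    {t : ℝ} (ht : t ∈ Icc a b) : X t ∈ rectClosed L h \ interior (rectClosed L h) :=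
  topLeftSides_subset hL.le hh.le (P.mem_left ht)

theorem mem_boundary_right (P : LevelParametrization L h a b f X Y) (hL : 0 < L) (hh : 0 < h)
    {t : ℝ} (ht : t ∈ Icc a b) : Y t ∈ rectClosed L h \ interior (rectClosed L h) :=
  bottomRightSides_subset hL.le hh.le (P.mem_right ht)

theorem exists_cross_pos_of_eq_bottomLeft (P : LevelParametrization L h a b f X Y)
    (hL : 0 < L) (hh : 0 < h) (hz : z ∈ rectOpen L h) {e : ℝ} (he : e ∈ Icc a b)
    (hXe : X e = !₂[-L, -h]) (hYe : Y e = !₂[-L, -h]) :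
    ∃ t ∈ Ioo a b, 0 < cross (Y t - X t) (z - X t) := by
  have hX : ∀ᶠ t in 𝓝[Icc a b] e, X t 1 < z 1 :=
    ((PiLp.continuous_apply 2 _ 1).continuousAt.comp_continuousWithinAt
      (P.continuousOn_left e he)).eventually_lt_const
      (by simp [hXe]; linarith [(abs_lt.1 hz.2).1])
  have hY : ∀ᶠ t in 𝓝[Icc a b] e, Y t 0 < z 0 :=
    ((PiLp.continuous_apply 2 _ 0).continuousAt.comp_continuousWithinAt
      (P.continuousOn_right e he)).eventually_lt_const
      (by simp [hYe]; linarith [(abs_lt.1 hz.1).1])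
  obtain ⟨t, ht, hXt, hYt⟩ := exists_mem_Ioo_of_eventually P.lt he (hX.and hY)
  exact ⟨t, ht, cross_pos_near_bottomLeft hz (P.mem_diff hL hh ht).1 (P.mem_diff hL hh ht).2
    hXt hYt⟩

theorem exists_cross_neg_of_eq_topRight (P : LevelParametrization L h a b f X Y)
    (hL : 0 < L) (hh : 0 < h) (hz : z ∈ rectOpen L h) {e : ℝ} (he : e ∈ Icc a b)
    (hXe : X e = !₂[L, h]) (hYe : Y e = !₂[L, h]) :
    ∃ t ∈ Ioo a b, cross (Y t - X t) (z - X t) < 0 := by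
  have hX : ∀ᶠ t in 𝓝[Icc a b] e, z 0 < X t 0 :=
    ((PiLp.continuous_apply 2 _ 0).continuousAt.comp_continuousWithinAt
      (P.continuousOn_left e he)).eventually_const_lt
      (by simp [hXe]; linarith [(abs_lt.1 hz.1).2])
  have hY : ∀ᶠ t in 𝓝[Icc a b] e, z 1 < Y t 1 :=
    ((PiLp.continuous_apply 2 _ 1).continuousAt.comp_continuousWithinAt
      (P.continuousOn_right e he)).eventually_const_lt
      (by simp [hYe]; linarith [(abs_lt.1 hz.2).2])
  obtain ⟨t, ht, hXt, hYt⟩ := exists_mem_Ioo_of_eventually P.lt he (hX.and hY)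
  exact ⟨t, ht, cross_neg_near_topRight hz (P.mem_diff hL hh ht).1 (P.mem_diff hL hh ht).2
    hXt hYt⟩

theorem exists_mem_segment (P : LevelParametrization L h a b f X Y) (hL : 0 < L) (hh : 0 < h)
    (hz : z ∈ rectOpen L h) : ∃ t ∈ Ioo a b, z ∈ segment ℝ (X t) (Y t) := by
  have ha : a ∈ Icc a b := left_mem_Icc.2 P.lt.le
  have hb : b ∈ Icc a b := right_mem_Icc.2 P.lt.le
  obtain ⟨t₁, ht₁, hneg⟩ : ∃ t ∈ Ioo a b, cross (Y t - X t) (z - X t) < 0 := by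
    rcases P.corners hL hh with ⟨-, hXb⟩ | ⟨hXa, -⟩
    · exact P.exists_cross_neg_of_eq_topRight hL hh hz hb hXb (P.finish ▸ hXb)
    · exact P.exists_cross_neg_of_eq_topRight hL hh hz ha hXa (P.start ▸ hXa)
  obtain ⟨t₂, ht₂, hpos⟩ : ∃ t ∈ Ioo a b, 0 < cross (Y t - X t) (z - X t) := by
    rcases P.corners hL hh with ⟨hXa, -⟩ | ⟨-, hXb⟩
    · exact P.exists_cross_pos_of_eq_bottomLeft hL hh hz ha hXa (P.start ▸ hXa)
    · exact P.exists_cross_pos_of_eq_bottomLeft hL hh hz hb hXb (P.finish ▸ hXb)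
  have hcont : ContinuousOn (fun t => cross (Y t - X t) (z - X t)) (Ioo a b) :=
    continuous_cross.comp_continuousOn ((P.continuousOn_right.sub P.continuousOn_left).prodMk
      (continuousOn_const.sub P.continuousOn_left)) |>.mono Ioo_subset_Icc_self
  obtain ⟨t, ht, hzero⟩ :=
    isPreconnected_Ioo.intermediate_value ht₁ ht₂ hcont ⟨hneg.le, hpos.le⟩
  obtain ⟨α, hα⟩ := exists_eq_smul_of_cross_eq_zero (P.sub_ne_zero_of_mem_Ioo hL hh ht) hzero
  exact ⟨t, ht, openSegment_subset_segment _ _ _ <|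
    (convex_rectClosed L h).mem_openSegment_of_notMem_interior (by rwa [interior_rectClosed])
      (P.mem_boundary_left hL hh (Ioo_subset_Icc_self ht))
      (P.mem_boundary_right hL hh (Ioo_subset_Icc_self ht)) (sub_eq_iff_eq_add'.1 hα)⟩

theorem level_eq_of_cross_eq_zero (P : LevelParametrization L h a b f X Y) (hL : 0 < L)
    (hh : 0 < h) (hz : z ∈ rectOpen L h) {t : ℝ} (ht : t ∈ Ioo a b)
    (hzt : z ∈ segment ℝ (X t) (Y t)) {w : E2}
    (hw : w ∈ topLeftSides L h ∪ bottomRightSides L h) (hcw : cross (Y t - X t) (w - X t) = 0) :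
    f w = t := by
  obtain ⟨α, hα⟩ := exists_eq_smul_of_cross_eq_zero (P.sub_ne_zero_of_mem_Ioo hL hh ht) hcw
  have hwK : w ∈ rectClosed L h \ interior (rectClosed L h) :=
    hw.elim (fun hw => topLeftSides_subset hL.le hh.le hw)
      (fun hw => bottomRightSides_subset hL.le hh.le hw)
  rcases (convex_rectClosed L h).eq_or_eq_of_notMem_interior (by rwa [interior_rectClosed])
    (P.mem_boundary_left hL hh (Ioo_subset_Icc_self ht))
    (P.mem_boundary_right hL hh (Ioo_subset_Icc_self ht)) hzt hwK (sub_eq_iff_eq_add'.1 hα)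
    with rfl | rfl
  exacts [P.level_left t (Ioo_subset_Icc_self ht), P.level_right t (Ioo_subset_Icc_self ht)]

theorem isPreconnected_upperArc (P : LevelParametrization L h a b f X Y) {s : ℝ}
    (hs : s ∈ Icc a b) : IsPreconnected (X '' Icc s b ∪ Y '' Icc s b) :=
  (isPreconnected_Icc.image X (P.continuousOn_left.mono (Icc_subset_Icc_left hs.1))).union (X b)
    ⟨b, right_mem_Icc.2 hs.2, rfl⟩ ⟨b, right_mem_Icc.2 hs.2, P.finish.symm⟩
    (isPreconnected_Icc.image Y (P.continuousOn_right.mono (Icc_subset_Icc_left hs.1)))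

theorem notMem_segment_of_lt (P : LevelParametrization L h a b f X Y) (hL : 0 < L)
    (hh : 0 < h) (hz : z ∈ rectOpen L h) {s t : ℝ} (hs : s ∈ Ioo a b) (ht : t ∈ Ioo a b)
    (hst : s < t) (hzs : z ∈ segment ℝ (X s) (Y s)) : z ∉ segment ℝ (X t) (Y t) := by
  intro hzt
  set c : E2 → ℝ := fun w => cross (Y s - X s) (w - X s)
  have hc : Continuous c :=
    continuous_cross.comp (continuous_const.prodMk (continuous_id.sub continuous_const))
  have hcz : c z = 0 := by
    simpa [c, cross, mul_comm] using cross_sub_mem_segment (Y s - X s) (X s) hzs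
  have hsub : Icc t b ⊆ Icc a b := Icc_subset_Icc_left ht.1.le
  obtain ⟨w, hw, hcw⟩ : (0 : ℝ) ∈ c '' (X '' Icc t b ∪ Y '' Icc t b) := by
    have hA := (P.isPreconnected_upperArc (Ioo_subset_Icc_self ht)).image c hc.continuousOn
    have hmem := cross_sub_mem_segment (Y s - X s) (X s) hzt
    rw [segment_eq_uIcc] at hmem
    exact (isPreconnected_iff_ordConnected.1 hA).uIcc_subset
      (mem_image_of_mem c (.inl (mem_image_of_mem X (left_mem_Icc.2 ht.2.le))))
      (mem_image_of_mem c (.inr (mem_image_of_mem Y (left_mem_Icc.2 ht.2.le)))) (hcz ▸ hmem)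
  have hwt : t ≤ f w ∧ w ∈ topLeftSides L h ∪ bottomRightSides L h := by
    rcases hw with ⟨u, hu, rfl⟩ | ⟨u, hu, rfl⟩
    · exact ⟨(P.level_left u (hsub hu)).symm ▸ hu.1, .inl (P.mem_left (hsub hu))⟩
    · exact ⟨(P.level_right u (hsub hu)).symm ▸ hu.1, .inr (P.mem_right (hsub hu))⟩
  linarith [P.level_eq_of_cross_eq_zero hL hh hz hs hzs hwt.2 hcw, hwt.1]

theorem existsUnique_mem_segment (P : LevelParametrization L h a b f X Y) (hL : 0 < L)
    (hh : 0 < h) (hz : z ∈ rectOpen L h) : ∃! t, t ∈ Ioo a b ∧ z ∈ segment ℝ (X t) (Y t) := by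
  obtain ⟨t, ht, hzt⟩ := P.exists_mem_segment hL hh hz
  refine ⟨t, ⟨ht, hzt⟩, fun s ⟨hs, hzs⟩ => ?_⟩
  rcases lt_trichotomy s t with hst | rfl | hts
  · exact absurd hzt (P.notMem_segment_of_lt hL hh hz hs ht hst hzs)
  · rfl
  · exact absurd hzs (P.notMem_segment_of_lt hL hh hz ht hs hts hzt)

theorem exists_chord_iff_mem_segment (P : LevelParametrization L h a b f X Y) {t : ℝ} (ht : t ∈ Icc a b) :
    (∃ p ∈ topLeftSides L h, ∃ q ∈ bottomRightSides L h, f p = t ∧ f q = t ∧ z ∈ segment ℝ p q) ↔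
      z ∈ segment ℝ (X t) (Y t) := by
  refine ⟨?_, fun hzt => ⟨X t, P.mem_left ht, Y t, P.mem_right ht, P.level_left t ht,
    P.level_right t ht, hzt⟩⟩
  rintro ⟨p, hp, q, hq, rfl, hqp, hzpq⟩
  rw [← P.image_left] at hp
  rw [← P.image_right] at hq
  obtain ⟨s, hs, rfl⟩ := hp
  obtain ⟨u, hu, rfl⟩ := hq
  rw [P.level_right u hu, P.level_left s hs] at hqp
  subst hqp
  rwa [P.level_left u hu]

end LevelParametrization

theorem rectangle_foliation_exists_unique_general
    (L h : ℝ) (hL : 0 < L) (hh : 0 < h)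
    (Ω : Set E2) (hΩ : Ω = {p : E2 | |p 0| < L ∧ |p 1| < h})
    (Γ₁ Γ₂ : Set E2)
    (hΓ₁ : Γ₁ = {p : E2 | (p 1 = h ∧ |p 0| ≤ L) ∨ (p 0 = -L ∧ |p 1| ≤ h)})
    (hΓ₂ : Γ₂ = {p : E2 | (p 1 = -h ∧ |p 0| ≤ L) ∨ (p 0 = L ∧ |p 1| ≤ h)})
    (f : E2 → ℝ) (hf : ContinuousOn f (Γ₁ ∪ Γ₂))
    (T₁ T₂ : ℝ) (hT₁ : 0 < T₁) (hT₂ : 0 < T₂)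
    (γ₁ γ₂ : ℝ → E2)
    (hγ₁c : ContinuousOn γ₁ (Icc 0 T₁)) (hγ₂c : ContinuousOn γ₂ (Icc 0 T₂))
    (hγ₁im : γ₁ '' Icc 0 T₁ = Γ₁) (hγ₂im : γ₂ '' Icc 0 T₂ = Γ₂)
    (hends0 : γ₁ 0 = γ₂ 0) (hends1 : γ₁ T₁ = γ₂ T₂)
    (hmono₁ : StrictMonoOn (f ∘ γ₁) (Icc 0 T₁))
    (hmono₂ : StrictMonoOn (f ∘ γ₂) (Icc 0 T₂)) :
    ∀ z ∈ Ω, ∃! t : ℝ, t ∈ Ioo (f (γ₁ 0)) (f (γ₁ T₁)) ∧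
      ∃ p ∈ Γ₁, ∃ q ∈ Γ₂, f p = t ∧ f q = t ∧ z ∈ segment ℝ p q := by
  intro z hz
  obtain ⟨X, hXc, hXim, hXf, hX0, hX1⟩ := exists_reparametrization_by_level hT₁.le hγ₁c
    (hf.mono (hγ₁im ▸ subset_union_left)) hmono₁
  obtain ⟨Y, hYc, hYim, hYf, hY0, hY1⟩ := exists_reparametrization_by_level hT₂.le hγ₂c
    (hf.mono (hγ₂im ▸ subset_union_right)) hmono₂
  simp only [← hends0, ← hends1] at hYc hYim hYf hY0 hY1
  subst hΩ hΓ₁ hΓ₂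
  have P : LevelParametrization L h (f (γ₁ 0)) (f (γ₁ T₁)) f X Y :=
    ⟨hmono₁ (left_mem_Icc.2 hT₁.le) (right_mem_Icc.2 hT₁.le) hT₁, hXc, hYc, hXim.trans hγ₁im,
      hYim.trans hγ₂im, hXf, hYf, hX0.trans hY0.symm, hX1.trans hY1.symm⟩
  exact (existsUnique_congr fun t => and_congr_right fun ht =>
    P.exists_chord_iff_mem_segment (Ioo_subset_Icc_self ht)).2 (P.existsUnique_mem_segment hL hh hz)

/-- for the rectangle `Ω = (-L,L) × (-h,h)` with `∂Ω = Γ₁ ∪ Γ₂` (top-left and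
bottom-right parts), `f` continuous on `∂Ω` and strictly monotone along each `Γᵢ`
(parametrized from the common corner where `f` is minimal to the one where it is maximal),
every point `z ∈ Ω` lies on exactly one segment `ℓᵗ` joining `xᵗ ∈ Γ₁` to `yᵗ ∈ Γ₂` with
`f(xᵗ) = f(yᵗ) = t`. -/
theorem rectangle_foliation_exists_unique
    (L h : ℝ) (hL : 0 < L) (hh : 0 < h)
    (Ω : Set E2) (hΩ : Ω = {p : E2 | |p 0| < L ∧ |p 1| < h})
    (Γ₁ Γ₂ : Set E2)
    (hΓ₁ : Γ₁ = {p : E2 | (p 1 = h ∧ |p 0| ≤ L) ∨ (p 0 = -L ∧ |p 1| ≤ h)})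
    (hΓ₂ : Γ₂ = {p : E2 | (p 1 = -h ∧ |p 0| ≤ L) ∨ (p 0 = L ∧ |p 1| ≤ h)})
    (f : E2 → ℝ) (hf : ContinuousOn f (Γ₁ ∪ Γ₂))
    (T₁ T₂ : ℝ) (hT₁ : 0 < T₁) (hT₂ : 0 < T₂)
    (γ₁ γ₂ : ℝ → E2)
    (hγ₁c : ContinuousOn γ₁ (Icc 0 T₁)) (hγ₂c : ContinuousOn γ₂ (Icc 0 T₂))
    (hγ₁i : InjOn γ₁ (Icc 0 T₁)) (hγ₂i : InjOn γ₂ (Icc 0 T₂))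
    (hγ₁im : γ₁ '' Icc 0 T₁ = Γ₁) (hγ₂im : γ₂ '' Icc 0 T₂ = Γ₂)
    (hends0 : γ₁ 0 = γ₂ 0) (hends1 : γ₁ T₁ = γ₂ T₂)
    (hmono₁ : StrictMonoOn (f ∘ γ₁) (Icc 0 T₁))
    (hmono₂ : StrictMonoOn (f ∘ γ₂) (Icc 0 T₂)) :
    ∀ z ∈ Ω, ∃! t : ℝ, t ∈ Ioo (f (γ₁ 0)) (f (γ₁ T₁)) ∧
      ∃ p ∈ Γ₁, ∃ q ∈ Γ₂, f p = t ∧ f q = t ∧ z ∈ segment ℝ p q :=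
  rectangle_foliation_exists_unique_general L h hL hh Ω hΩ Γ₁ Γ₂ hΓ₁ hΓ₂ f hf T₁ T₂ hT₁ hT₂ γ₁ γ₂
    hγ₁c hγ₂c hγ₁im hγ₂im hends0 hends1 hmono₁ hmono₂

end
end

section
/- Let Ω ⊆ ℝ² be strictly convex with Γ, Υ as above, let [0,L) ∋ s ↦ x(s) be an arclength parametrization of Γ with endpoints x(0) = a, x(L) = b of Υ. Define B_a = {s ∈ (0,L) : dist(x(s), Υ) = |x(s) − a|} and B_b analogously for b. Then sup B_a is attained (sup B_a ∈ B_a) and inf B_b is attained, and if the set S = {x ∈ Γ : dist(x, Υ) is realized at some point of the relative interior of Υ} is nonempty, then sup B_a = inf x⁻¹(S) and inf B_b = sup x⁻¹(S). -/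
/-!
Gluing the arc `Γ` (parametrized by `x`) to the arc `Υ` gives a simple closed curve whose image
is `∂Ω`. It is also the whole frontier of the convex body `closure Ω`: that frontier is a
topological circle, and a circle cannot sit inside a simple closed curve minus a point, which is
an arc. Now let `υ u` be a nearest point of `Υ` to `x s` and `υ u'` one to `x s'`, with `s < s'`.
If `u < u'`, the four boundary points `x s, x s', υ u, υ u'` occur in this cyclic order, so by
strict convexity the chords `[x s, υ u]` and `[x s', υ u']` cross; the triangle inequality through
the crossing point then forces `υ u = υ u'`. So nearest-point parameters move backwards along `Υ`
as `s` moves forwards, and both identities are order-theoretic consequences of this, the second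
one by order duality. The suprema and infima are attained because `B_a` and `B_b` are closed in
`(0, L)` and stay away from `L` and `0` respectively.
-/

open MeasureTheory Set Filter Metric Bornology
open scoped ENNReal Topology

noncomputable section

open Function

theorem IsClosed.inter_setOf_eq {α Y : Type*} [TopologicalSpace α] [TopologicalSpace Y]
    [T2Space Y] {s : Set α} {f g : α → Y} (hs : IsClosed s) (hf : ContinuousOn f s)
    (hg : ContinuousOn g s) : IsClosed (s ∩ {x | f x = g x}) :=
  (hf.prodMk hg).preimage_isClosed_of_isClosed hs isClosed_diagonal

section Order

variable {α β : Type*} [ConditionallyCompleteLinearOrder α]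

theorem csSup_Ioo_inter_mem [TopologicalSpace α] [OrderTopology α] {Z : Set α} {lo hi : α}
    (hZ : IsClosed (Icc lo hi ∩ Z)) (hne : (Ioo lo hi ∩ Z).Nonempty) (hhi : hi ∉ Z) :
    sSup (Ioo lo hi ∩ Z) ∈ Ioo lo hi ∩ Z := by
  have hbdd : BddAbove (Ioo lo hi ∩ Z) := ⟨hi, fun s hs => hs.1.2.le⟩
  have hcl : sSup (Ioo lo hi ∩ Z) ∈ Icc lo hi ∩ Z :=
    hZ.closure_subset_iff.2 (inter_subset_inter_left _ Ioo_subset_Icc_self)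
      (csSup_mem_closure hne hbdd)
  obtain ⟨s, hs⟩ := hne
  exact ⟨⟨hs.1.1.trans_le (le_csSup hbdd hs), hcl.1.2.lt_of_ne fun h => hhi (h ▸ hcl.2)⟩, hcl.2⟩

theorem csInf_Ioo_inter_mem [TopologicalSpace α] [OrderTopology α] {Z : Set α} {lo hi : α}
    (hZ : IsClosed (Icc lo hi ∩ Z)) (hne : (Ioo lo hi ∩ Z).Nonempty) (hlo : lo ∉ Z) :
    sInf (Ioo lo hi ∩ Z) ∈ Ioo lo hi ∩ Z := by
  have := csSup_Ioo_inter_mem (α := αᵒᵈ) (lo := OrderDual.toDual hi) (hi := OrderDual.toDual lo)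
    (Z := OrderDual.ofDual ⁻¹' Z) (by rwa [Icc_toDual]) (by rwa [Ioo_toDual]) hlo
  rwa [Ioo_toDual] at this

theorem csSup_eq_csInf_of_antitone [DenselyOrdered α] [LinearOrder β] {I : Set α}
    (hI : I.OrdConnected) (hIa : BddAbove I) (hIb : BddBelow I) {R : α → β → Prop} {lo hi : β}
    (hex : ∀ s ∈ I, ∃ u ∈ Icc lo hi, R s u)
    (hanti : ∀ s ∈ I, ∀ s' ∈ I, s < s' → ∀ u ∈ Icc lo hi, ∀ u' ∈ Icc lo hi,
      R s u → R s' u' → u' ≤ u)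
    (hmem : sSup {s ∈ I | R s hi} ∈ {s ∈ I | R s hi})
    (hT : {s ∈ I | ∃ u ∈ Ioo lo hi, R s u}.Nonempty) :
    sSup {s ∈ I | R s hi} = sInf {s ∈ I | ∃ u ∈ Ioo lo hi, R s u} := by
  set σ := sSup {s ∈ I | R s hi}
  set T := {s ∈ I | ∃ u ∈ Ioo lo hi, R s u}
  have ⟨_, _, u₀, hu₀, _⟩ := hT
  have hhi : hi ∈ Icc lo hi := right_mem_Icc.2 (hu₀.1.trans hu₀.2).le
  have hTbdd : BddBelow T := hIb.mono fun s hs => hs.1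
  refine le_antisymm (le_csInf hT ?_) (not_lt.1 fun hlt => ?_)
  · rintro t ⟨htI, u, hu, htu⟩
    refine not_lt.1 fun htσ => hu.2.not_ge ?_
    exact hanti t htI σ hmem.1 htσ u (Ioo_subset_Icc_self hu) hi hhi htu hmem.2
  · obtain ⟨s, hσs, hsT⟩ := exists_between hlt
    obtain ⟨t, htT⟩ := hT
    have hts : s < t := hsT.trans_le (csInf_le hTbdd htT)
    have hsI : s ∈ I := hI.out hmem.1 htT.1 ⟨hσs.le, hts.le⟩
    obtain ⟨u, hu, hsu⟩ := hex s hsI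
    obtain ⟨v, hv, htv⟩ := htT.2
    rcases hu.2.eq_or_lt with rfl | hu_hi
    · exact hσs.not_ge (le_csSup (hIa.mono fun x hx => hx.1) ⟨hsI, hsu⟩)
    rcases hu.1.eq_or_lt with rfl | hlo_u
    · exact hv.1.not_ge (hanti s hsI t htT.1 hts _ hu v (Ioo_subset_Icc_self hv) hsu htv)
    · exact hsT.not_ge (csInf_le hTbdd ⟨hsI, u, ⟨hlo_u, hu_hi⟩, hsu⟩)

theorem csInf_eq_csSup_of_antitone [DenselyOrdered α] [LinearOrder β] {I : Set α}
    (hI : I.OrdConnected) (hIa : BddAbove I) (hIb : BddBelow I) {R : α → β → Prop} {lo hi : β}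
    (hex : ∀ s ∈ I, ∃ u ∈ Icc lo hi, R s u)
    (hanti : ∀ s ∈ I, ∀ s' ∈ I, s < s' → ∀ u ∈ Icc lo hi, ∀ u' ∈ Icc lo hi,
      R s u → R s' u' → u' ≤ u)
    (hmem : sInf {s ∈ I | R s lo} ∈ {s ∈ I | R s lo})
    (hT : {s ∈ I | ∃ u ∈ Ioo lo hi, R s u}.Nonempty) :
    sInf {s ∈ I | R s lo} = sSup {s ∈ I | ∃ u ∈ Ioo lo hi, R s u} := by
  have hT' : {s ∈ I | ∃ u ∈ Ioo lo hi, R s u} =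
      {s ∈ I | ∃ u ∈ Ioo (OrderDual.toDual hi) (OrderDual.toDual lo),
        R s (OrderDual.ofDual u)} := by
    simp only [Ioo_toDual]; rfl
  rw [hT']
  exact csSup_eq_csInf_of_antitone (α := αᵒᵈ) (β := βᵒᵈ) (I := OrderDual.ofDual ⁻¹' I)
    (R := fun s u => R (OrderDual.ofDual s) (OrderDual.ofDual u))
    (lo := OrderDual.toDual hi) (hi := OrderDual.toDual lo) hI.dual hIb.dual hIa.dual
    (fun s hs => let ⟨u, hu, h⟩ := hex s hs; ⟨OrderDual.toDual u, ⟨hu.2, hu.1⟩, h⟩)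
    (fun s hs s' hs' hss u hu u' hu' h h' =>
      hanti s' hs' s hs hss u' ⟨hu'.2, hu'.1⟩ u ⟨hu.2, hu.1⟩ h' h)
    hmem (hT' ▸ hT)

end Order

section Curve

variable {X : Type*} {γ : ℝ → X} {P : ℝ}

structure IsSimpleClosedCurve [TopologicalSpace X] (γ : ℝ → X) (P : ℝ) : Prop where
  pos : 0 < P
  continuous : Continuous γ
  periodic : Periodic γ P
  injOn : InjOn γ (Ioc 0 P)

theorem Function.Periodic.apply_toIocMod (hper : Periodic γ P) (hP : 0 < P) (t r : ℝ) :
    γ (toIocMod hP t r) = γ r :=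
  hper.sub_zsmul_eq _

namespace IsSimpleClosedCurve

variable [TopologicalSpace X]

theorem injOn_Ico (hγ : IsSimpleClosedCurve γ P) (t : ℝ) : InjOn γ (Ico t (t + P)) := by
  intro r hr r' hr' h
  rw [← hγ.periodic.apply_toIocMod hγ.pos 0 r, ← hγ.periodic.apply_toIocMod hγ.pos 0 r'] at h
  have hmod := (toIocMod_eq_toIocMod hγ.pos).1 (hγ.injOn
    (by simpa using toIocMod_mem_Ioc hγ.pos 0 r) (by simpa using toIocMod_mem_Ioc hγ.pos 0 r') h)
  rw [← (toIcoMod_eq_self hγ.pos).2 hr, ← (toIcoMod_eq_self hγ.pos).2 hr']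
  exact (toIcoMod_eq_toIcoMod hγ.pos).2 hmod

theorem image_Ioc (hγ : IsSimpleClosedCurve γ P) (t : ℝ) : γ '' Ioc t (t + P) = range γ := by
  refine (image_subset_range _ _).antisymm ?_
  rintro _ ⟨r, rfl⟩
  exact ⟨_, toIocMod_mem_Ioc hγ.pos t r, hγ.periodic.apply_toIocMod hγ.pos t r⟩

end IsSimpleClosedCurve

theorem exists_periodic_eqOn [TopologicalSpace X] {F : ℝ → X} (hP : 0 < P)
    (hF : ContinuousOn F (Icc 0 P)) (hFP : F 0 = F P) :
    ∃ γ : ℝ → X, Continuous γ ∧ Periodic γ P ∧ EqOn γ F (Icc 0 P) := by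
  have : Fact (0 < P) := ⟨hP⟩
  set γ : ℝ → X := fun r => AddCircle.liftIco P 0 F r
  have hγF : EqOn γ F (Ico 0 P) := fun r hr =>
    AddCircle.liftIco_coe_apply (by rwa [zero_add])
  have hper : Periodic γ P := fun r => by simp only [γ, AddCircle.coe_add_period]
  refine ⟨γ, (AddCircle.liftIco_continuous (by rwa [zero_add]) (by rwa [zero_add])).comp
    (AddCircle.continuous_mk' P), hper, fun r hr => ?_⟩
  rcases hr.2.lt_or_eq with hr' | rfl
  · exact hγF ⟨hr.1, hr'⟩
  · rw [← zero_add r, hper, hγF ⟨le_rfl, hP⟩, hFP, zero_add]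

def concatArc (f g : ℝ → X) (L r : ℝ) : X := if r ≤ L then f r else g (r - L)

section Concat

variable {f g : ℝ → X} {L M r u : ℝ}

theorem concatArc_of_le (h : r ≤ L) : concatArc f g L r = f r := if_pos h

theorem concatArc_add (hfg : f L = g 0) (hu : 0 ≤ u) : concatArc f g L (L + u) = g u := by
  rcases hu.eq_or_lt with rfl | hu
  · simp [concatArc, hfg]
  · simp [concatArc, hu.not_ge]

theorem continuousOn_concatArc [TopologicalSpace X] (hf : ContinuousOn f (Icc 0 L))
    (hg : ContinuousOn g (Icc 0 M)) (hfg : f L = g 0) (hL : 0 ≤ L) (hM : 0 ≤ M) :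
    ContinuousOn (concatArc f g L) (Icc 0 (L + M)) := by
  rw [← Icc_union_Icc_eq_Icc hL (le_add_of_nonneg_right hM)]
  refine ContinuousOn.union_of_isClosed (hf.congr fun r hr => concatArc_of_le hr.2)
    ?_ isClosed_Icc isClosed_Icc
  refine (hg.comp (f := fun r => r - L) (by fun_prop) fun r hr => ?_).congr fun r hr => ?_
  · exact ⟨by linarith [hr.1], by linarith [hr.2]⟩
  · rw [comp_apply, ← concatArc_add hfg (sub_nonneg.2 hr.1), add_sub_cancel]

theorem exists_isSimpleClosedCurve_concatArc [TopologicalSpace X] (hL : 0 < L) (hM : 0 < M)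
    (hf : ContinuousOn f (Icc 0 L)) (hg : ContinuousOn g (Icc 0 M))
    (hfi : InjOn f (Ioo 0 L)) (hgi : InjOn g (Icc 0 M)) (hfg : f L = g 0) (hgf : g M = f 0)
    (hdisj : Disjoint (f '' Ioo 0 L) (g '' Icc 0 M)) :
    ∃ γ : ℝ → X, IsSimpleClosedCurve γ (L + M) ∧ range γ = f '' Ioo 0 L ∪ g '' Icc 0 M ∧
      EqOn γ f (Icc 0 L) ∧ ∀ u ∈ Icc 0 M, γ (L + u) = g u := by
  obtain ⟨γ, hc, hper, hγF⟩ := exists_periodic_eqOn (add_pos hL hM)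
    (continuousOn_concatArc hf hg hfg hL.le hM.le)
    (by rw [concatArc_of_le hL.le, concatArc_add hfg hM.le, hgf])
  have hγf : EqOn γ f (Icc 0 L) := fun r hr =>
    (hγF ⟨hr.1, by linarith [hr.2]⟩).trans (concatArc_of_le hr.2)
  have hγg : ∀ u ∈ Icc 0 M, γ (L + u) = g u := fun u hu =>
    (hγF ⟨by linarith [hu.1], by linarith [hu.2]⟩).trans (concatArc_add hfg hu.1)
  have hIcc : Icc L (L + M) = (L + ·) '' Icc 0 M := by rw [image_const_add_Icc, add_zero]
  have himg : γ '' Icc L (L + M) = g '' Icc 0 M := by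
    rw [hIcc, image_image]; exact image_congr hγg
  have hsplit := Ioo_union_Icc_eq_Ioc hL (le_add_of_nonneg_right hM.le)
  have hγ : IsSimpleClosedCurve γ (L + M) := by
    refine ⟨add_pos hL hM, hc, hper, ?_⟩
    rw [← hsplit, injOn_union (disjoint_left.2 fun x hx hx' => hx.2.not_ge hx'.1)]
    refine ⟨(hfi.congr (hγf.mono Ioo_subset_Icc_self).symm), ?_, ?_⟩
    · rw [hIcc]
      rintro _ ⟨v, hv, rfl⟩ _ ⟨v', hv', rfl⟩ h
      rw [hγg v hv, hγg v' hv'] at h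
      rw [hgi hv hv' h]
    · intro x hx y hy h
      refine hdisj.ne_of_mem ⟨x, hx, rfl⟩ (himg ▸ mem_image_of_mem γ hy) ?_
      rw [← h, hγf (Ioo_subset_Icc_self hx)]
  refine ⟨γ, hγ, ?_, hγf, hγg⟩
  rw [← hγ.image_Ioc 0, zero_add, ← hsplit, image_union, himg,
    (hγf.mono Ioo_subset_Icc_self).image_eq]

end Concat

end Curve

theorem Function.Periodic.nonneg_of_pos_of_pos {F : ℝ → ℝ} {P : ℝ} (hF : Continuous F)
    (hper : Periodic F P) {r₁ r₂ r₃ r₄ : ℝ} (h₁₂ : r₁ < r₂) (h₂₃ : r₂ < r₃) (h₃₄ : r₃ < r₄)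
    (h₄₁ : r₄ < r₁ + P) (h₁ : F r₁ = 0) (h₃ : F r₃ = 0)
    (hne : ∀ r ∈ Ioo r₁ r₃ ∪ Ioo r₃ (r₁ + P), F r ≠ 0) (h₂ : 0 < F r₂) (h₄ : 0 < F r₄)
    (r : ℝ) : 0 ≤ F r := by
  have hP : 0 < P := by linarith
  have hpos : ∀ {a b c : ℝ}, Ioo a b ⊆ Ioo r₁ r₃ ∪ Ioo r₃ (r₁ + P) → c ∈ Ioo a b →
      0 < F c → ∀ s ∈ Ioo a b, 0 ≤ F s := by
    intro a b c hsub hc hFc s hs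
    by_contra! hFs
    obtain ⟨d, hd, hd0⟩ :=
      isPreconnected_Ioo.intermediate_value hs hc hF.continuousOn ⟨hFs.le, hFc.le⟩
    exact hne d (hsub hd) hd0
  rw [← hper.apply_toIocMod hP r₁ r]
  obtain ⟨hr₁, hr₂⟩ := toIocMod_mem_Ioc hP r₁ r
  rcases lt_trichotomy (toIocMod hP r₁ r) r₃ with h | h | h
  · exact hpos subset_union_left ⟨h₁₂, h₂₃⟩ h₂ _ ⟨hr₁, h⟩
  · exact h ▸ h₃.ge
  rcases hr₂.lt_or_eq with h' | h'
  · exact hpos subset_union_right ⟨h₃₄, h₄₁⟩ h₄ _ ⟨h, h'⟩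
  · rw [h', hper r₁, h₁]

section Sphere

variable {F : Type*} [NormedAddCommGroup F] [InnerProductSpace ℝ F]

theorem isPreconnected_sphere_compl_singleton (c : sphere (0 : F) 1) :
    IsPreconnected ({c}ᶜ : Set (sphere (0 : F) 1)) := by
  have hc : ‖(c : F)‖ = 1 := norm_eq_of_mem_sphere c
  rw [← range_stereographic_symm hc c.2]
  exact isPreconnected_range (continuousOn_univ.1
    (stereographic_target hc ▸ (stereographic hc).continuousOn_symm))

theorem not_injective_of_continuous_sphere (hF : 1 < Module.rank ℝ F)
    {g : sphere (0 : F) 1 → ℝ} (hg : Continuous g) : ¬ Injective g := by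
  intro hinj
  have : ConnectedSpace (sphere (0 : F) 1) :=
    isConnected_iff_connectedSpace.1 (isConnected_sphere hF 0 zero_le_one)
  have : Nontrivial F := rank_pos_iff_nontrivial.1 (zero_lt_one.trans hF)
  obtain ⟨x⟩ := (NormedSpace.sphere_nonempty (x := (0 : F)) (r := 1)).2 zero_le_one |>.to_subtype
  obtain ⟨a, b, hab⟩ : ∃ a b : sphere (0 : F) 1, g a < g b := by
    rcases (hinj.ne (ne_neg_of_mem_unit_sphere ℝ x)).lt_or_gt with h | h
    exacts [⟨_, _, h⟩, ⟨_, _, h⟩]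
  obtain ⟨c, hc⟩ : (g a + g b) / 2 ∈ range g :=
    intermediate_value_univ a b hg ⟨by linarith, by linarith⟩
  have hac : a ≠ c := by rintro rfl; linarith
  have hbc : b ≠ c := by rintro rfl; linarith
  obtain ⟨d, hd, hdc⟩ := (isPreconnected_sphere_compl_singleton c).intermediate_value
    hac hbc hg.continuousOn (show g c ∈ Icc (g a) (g b) from ⟨by linarith, by linarith⟩)
  exact hd (hinj hdc)

end Sphere

namespace IsSimpleClosedCurve

variable {X : Type*} [TopologicalSpace X] [T2Space X] {γ : ℝ → X} {P : ℝ}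

theorem range_subset_of_homeomorph_sphere {F : Type*} [NormedAddCommGroup F]
    [InnerProductSpace ℝ F] [FiniteDimensional ℝ F] (hF : 1 < Module.rank ℝ F)
    (hγ : IsSimpleClosedCurve γ P) {C : Set X} (e : C ≃ₜ sphere (0 : F) 1)
    (hC : C ⊆ range γ) : range γ ⊆ C := by
  rintro _ ⟨t, rfl⟩
  by_contra ht
  -- Missing `γ t`, the set `C` lies on the arc `γ '' Ioo t (t + P)`, which is a copy of an
  -- interval; so the circle would embed in `ℝ`.
  have hCc : IsCompact C := isCompact_iff_compactSpace.2 e.symm.compactSpace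
  set R := Icc t (t + P) ∩ γ ⁻¹' C
  have hRIco : R ⊆ Ico t (t + P) := fun r hr =>
    ⟨hr.1.1, hr.1.2.lt_of_ne fun h => ht (by rw [← hγ.periodic t, ← h]; exact hr.2)⟩
  have hbij : BijOn γ R C := by
    refine ⟨fun r hr => hr.2, (hγ.injOn_Ico t).mono hRIco, fun x hx => ?_⟩
    obtain ⟨r, hr, rfl⟩ := (hγ.image_Ioc t).symm ▸ hC hx
    exact ⟨r, ⟨Ioc_subset_Icc_self hr, hx⟩, rfl⟩
  have : CompactSpace R := isCompact_iff_compactSpace.1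
    (isCompact_Icc.inter_right (hCc.isClosed.preimage hγ.continuous))
  let h : R ≃ₜ C := Continuous.homeoOfEquivCompactToT2 (f := hbij.equiv γ)
    (hγ.continuous.continuousOn.mapsToRestrict hbij.mapsTo)
  exact not_injective_of_continuous_sphere hF (g := fun x => (h.symm (e.symm x) : ℝ))
    (by fun_prop) (Subtype.val_injective.comp (h.symm.injective.comp e.symm.injective))

theorem range_eq_frontier_closure {E : Type*} [NormedAddCommGroup E]
    [InnerProductSpace ℝ E] [FiniteDimensional ℝ E] (hE : 1 < Module.rank ℝ E) {γ : ℝ → E}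
    {P : ℝ} (hγ : IsSimpleClosedCurve γ P) {Ω : Set E} (hΩo : IsOpen Ω) (hb : IsBounded Ω)
    (hne : Ω.Nonempty) (hconv : Convex ℝ (closure Ω)) (hrange : range γ = frontier Ω) :
    range γ = frontier (closure Ω) := by
  obtain ⟨h, -, -, hfr⟩ := exists_homeomorph_image_interior_closure_frontier_eq_unitBall hconv
    (hne.mono (interior_maximal subset_closure hΩo)) hb.closure
  have hsub : frontier (closure Ω) ⊆ range γ := hrange ▸ frontier_closure_subset
  exact (hγ.range_subset_of_homeomorph_sphere hE ((h.image _).trans (.setCongr hfr)) hsub).antisymm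
    hsub

end IsSimpleClosedCurve

section Convex

variable {E : Type*}

theorem StrictConvex.mem_segment_of_sub_eq_smul [AddCommGroup E] [Module ℝ E] [TopologicalSpace E]
    {K : Set E} (hsc : StrictConvex ℝ K) {p y x : E} (hp : p ∈ K) (hy : y ∈ K) (hx : x ∈ K)
    (hpi : p ∉ interior K) (hyi : y ∉ interior K) {t : ℝ} (hxt : x - p = t • (y - p)) :
    x ∈ segment ℝ p y := by
  rcases eq_or_ne p y with rfl | hpy
  · rw [sub_self, smul_zero, sub_eq_zero] at hxt
    simp [hxt]
  have hx_eq : x = p + t • (y - p) := by rw [← hxt, add_sub_cancel]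
  have hyp : y - p ≠ 0 := sub_ne_zero.2 hpy.symm
  rcases lt_or_ge t 0 with ht | ht
  · have h1t : 1 - t ≠ 0 := by linarith
    refine absurd (hsc.openSegment_subset hx hy (fun hxy => ?_) ?_) hpi
    · have : (1 - t) • (y - p) = 0 := by rw [sub_smul, one_smul, ← hxt, hxy, sub_self]
      exact hyp ((smul_eq_zero.1 this).resolve_left h1t)
    · rw [openSegment_eq_image']
      refine ⟨-t / (1 - t), ⟨div_pos (by linarith) (by linarith), by
        rw [div_lt_one (by linarith)]; linarith⟩, ?_⟩
      rw [hx_eq]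
      match_scalars <;> field_simp <;> ring
  rcases le_or_gt t 1 with ht' | ht'
  · rw [segment_eq_image']
    exact ⟨t, ⟨ht, ht'⟩, hx_eq.symm⟩
  · refine absurd (hsc.openSegment_subset hp hx (fun hpx => ?_) ?_) hyi
    · rw [← hpx, sub_self] at hxt
      exact hyp ((smul_eq_zero.1 hxt.symm).resolve_left (by linarith))
    · rw [openSegment_eq_image']
      refine ⟨1 / t, ⟨by positivity, by rw [div_lt_one (by linarith)]; exact ht'⟩, ?_⟩
      rw [hx_eq]
      match_scalars <;> field_simp
      ring

theorem StrictConvex.eq_or_eq_of_mem_segment [AddCommGroup E] [Module ℝ E] [TopologicalSpace E]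
    {K : Set E} (hsc : StrictConvex ℝ K) {p y x : E} (hp : p ∈ K) (hy : y ∈ K)
    (hx : x ∈ segment ℝ p y) (hxi : x ∉ interior K) : x = p ∨ x = y := by
  rw [← insert_endpoints_openSegment] at hx
  rcases hx with hx | hx | hx
  · exact .inl hx
  · exact .inr hx
  · rcases eq_or_ne p y with rfl | hpy
    · rw [openSegment_same] at hx
      exact .inl hx
    · exact absurd (hsc.openSegment_subset hp hy hpy hx) hxi

theorem StrictConvex.eq_of_forall_frontier_le [NormedAddCommGroup E] [NormedSpace ℝ E]
    {K : Set E} (hsc : StrictConvex ℝ K) (hK : IsCompact K) {ℓ : E →L[ℝ] ℝ} (hℓ : ℓ ≠ 0)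
    {p y : E} (hp : p ∈ K) (hy : y ∈ K) (hfr : ∀ x ∈ frontier K, ℓ p ≤ ℓ x)
    (hyp : ℓ y = ℓ p) : p = y := by
  have hmin : ∀ x, ¬ IsLocalMin ℓ x := fun x h => hℓ (h.hasFDerivAt_eq_zero ℓ.hasFDerivAt)
  have hK_le : ∀ x ∈ K, ℓ p ≤ ℓ x := by
    obtain ⟨m, hmK, hm⟩ := hK.exists_isMinOn ⟨p, hp⟩ ℓ.continuous.continuousOn
    have hmfr : m ∈ frontier K := by
      rw [hK.isClosed.frontier_eq]
      exact ⟨hmK, fun hmi => hmin m (hm.isLocalMin (mem_interior_iff_mem_nhds.1 hmi))⟩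
    exact fun x hx => (hfr m hmfr).trans (hm hx)
  by_contra hpy
  have hz : (1 / 2 : ℝ) • p + (1 / 2 : ℝ) • y ∈ interior K :=
    hsc.openSegment_subset hp hy hpy ⟨_, _, by norm_num, by norm_num, by norm_num, rfl⟩
  refine hmin _ (Filter.eventually_of_mem (mem_interior_iff_mem_nhds.1 hz) fun x hx => ?_)
  calc ℓ ((1 / 2 : ℝ) • p + (1 / 2 : ℝ) • y) = ℓ p := by
        rw [map_add, map_smul, map_smul, hyp, smul_eq_mul]; ring
    _ ≤ ℓ x := hK_le x hx

theorem eq_of_mem_segment_of_mem_segment [NormedAddCommGroup E] [NormedSpace ℝ E]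
    {q z y y' : E} (hzq : z ≠ q) (hy : z ∈ segment ℝ q y) (hy' : z ∈ segment ℝ q y')
    (hd : dist q y = dist q y') : y = y' := by
  have hray : ∀ {w}, z ∈ segment ℝ q w → SameRay ℝ (z - q) (w - q) := fun {w} hw => by
    rw [show w - q = (z - q) + (w - z) by abel]
    exact (SameRay.refl _).add_right (mem_segment_iff_sameRay.1 hw)
  have := ((hray hy).symm.trans (hray hy') fun h => absurd h (sub_ne_zero.2 hzq)).eq_of_norm_eq
  rw [← dist_eq_norm, ← dist_eq_norm, dist_comm, hd, dist_comm] at this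
  exact sub_left_injective (this rfl)

theorem eq_of_mem_segment_inter_of_dist_le [NormedAddCommGroup E] [NormedSpace ℝ E]
    [StrictConvexSpace ℝ E] {p p' y y' z : E} (hz : z ∈ segment ℝ p y)
    (hz' : z ∈ segment ℝ p' y') (hpp' : p ≠ p') (h : dist p y ≤ dist p y')
    (h' : dist p' y' ≤ dist p' y) : y = y' := by
  have d₁ := dist_add_dist_of_mem_segment hz
  have d₂ := dist_add_dist_of_mem_segment hz'
  have t₁ := dist_triangle p z y'
  have t₂ := dist_triangle p' z y
  have hpzy' : z ∈ segment ℝ p y' :=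
    mem_segment_iff_wbtw.2 (dist_add_dist_eq_iff.1 (by linarith))
  have hp'zy : z ∈ segment ℝ p' y :=
    mem_segment_iff_wbtw.2 (dist_add_dist_eq_iff.1 (by linarith))
  by_cases hzp : z = p
  · exact (eq_of_mem_segment_of_mem_segment (hzp ▸ hpp') hz' hp'zy (by linarith)).symm
  · exact eq_of_mem_segment_of_mem_segment hzp hz hpzy' (by linarith)

/-- A line through `γ r₁` and `γ r₃` that meets `K` only along their chord separates `γ r₂` from
`γ r₄`: otherwise it would support the strictly convex body `K`. -/
theorem IsSimpleClosedCurve.lt_of_le_of_forall_mem_segment [NormedAddCommGroup E]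
    [NormedSpace ℝ E] {K : Set E} (hsc : StrictConvex ℝ K) (hK : IsCompact K) {γ : ℝ → E}
    {P : ℝ} (hγ : IsSimpleClosedCurve γ P) (hrange : range γ = frontier K)
    {r₁ r₂ r₃ r₄ : ℝ} (h₁₂ : r₁ < r₂) (h₂₃ : r₂ < r₃) (h₃₄ : r₃ < r₄) (h₄₁ : r₄ < r₁ + P)
    {φ : E →L[ℝ] ℝ} (hφ : φ ≠ 0)
    (hline : ∀ x ∈ K, φ x = φ (γ r₁) → x ∈ segment ℝ (γ r₁) (γ r₃))
    (h₃ : φ (γ r₃) = φ (γ r₁)) (h₂ : φ (γ r₁) ≤ φ (γ r₂)) : φ (γ r₄) < φ (γ r₁) := by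
  have hfr : ∀ r, γ r ∈ frontier K := fun r => hrange ▸ mem_range_self r
  have hγK : ∀ r, γ r ∈ K := fun r => hK.isClosed.frontier_subset (hfr r)
  have hγi : ∀ r, γ r ∉ interior K := fun r => ((hK.isClosed.frontier_eq ▸ hfr r) : _).2
  have hinj := hγ.injOn_Ico r₁
  have hne : ∀ r ∈ Ioo r₁ r₃ ∪ Ioo r₃ (r₁ + P), φ (γ r) - φ (γ r₁) ≠ 0 := by
    intro r hr h
    have hr' : r ∈ Ico r₁ (r₁ + P) := by
      rcases hr with hr | hr
      exacts [⟨hr.1.le, by linarith [hr.2]⟩, ⟨by linarith [hr.1], hr.2⟩]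
    rcases hsc.eq_or_eq_of_mem_segment (hγK _) (hγK _)
      (hline _ (hγK r) (sub_eq_zero.1 h)) (hγi r) with h' | h'
    · have := hinj hr' ⟨le_rfl, by linarith⟩ h'
      rcases hr with hr | hr <;> linarith [hr.1]
    · have := hinj hr' ⟨by linarith, by linarith⟩ h'
      rcases hr with hr | hr
      exacts [hr.2.ne this, hr.1.ne' this]
  by_contra! h₄
  have hnn := Periodic.nonneg_of_pos_of_pos (F := fun r => φ (γ r) - φ (γ r₁))
    ((φ.continuous.comp hγ.continuous).sub continuous_const)
    (fun r => by simp only [hγ.periodic r]) h₁₂ h₂₃ h₃₄ h₄₁ (sub_self _) (sub_eq_zero.2 h₃) hne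
    ((sub_nonneg.2 h₂).lt_of_ne (hne r₂ (.inl ⟨h₁₂, h₂₃⟩)).symm)
    ((sub_nonneg.2 h₄).lt_of_ne (hne r₄ (.inr ⟨h₃₄, h₄₁⟩)).symm)
  refine (h₁₂.trans h₂₃).ne (hinj ⟨le_rfl, by linarith⟩ ⟨by linarith, by linarith⟩ ?_)
  refine hsc.eq_of_forall_frontier_le hK hφ (hγK _) (hγK _) (fun x hx => ?_) h₃
  obtain ⟨r, rfl⟩ := hrange ▸ hx
  exact sub_nonneg.1 (hnn r)

end Convex

section Plane

variable {E : Type*} [NormedAddCommGroup E] [InnerProductSpace ℝ E]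
  [Fact (Module.finrank ℝ E = 2)]

theorem Orientation.exists_eq_smul_of_areaForm_eq_zero (o : Orientation ℝ E (Fin 2)) {a v : E}
    (ha : a ≠ 0) (h : o.areaForm a v = 0) : ∃ t : ℝ, v = t • a := by
  rcases le_total 0 (inner ℝ a v) with hi | hi
  · obtain ⟨t, -, ht⟩ :=
      ((o.nonneg_inner_and_areaForm_eq_zero_iff_sameRay a v).1 ⟨hi, h⟩).exists_nonneg_left ha
    exact ⟨t, ht.symm⟩
  · obtain ⟨t, -, ht⟩ := ((o.nonneg_inner_and_areaForm_eq_zero_iff_sameRay a (-v)).1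
      ⟨by simpa [inner_neg_right] using hi, by simp [h]⟩).exists_nonneg_left ha
    exact ⟨-t, by rw [neg_smul, ht, neg_neg]⟩

theorem IsSimpleClosedCurve.segment_inter_nonempty {K : Set E} (hsc : StrictConvex ℝ K)
    (hK : IsCompact K) {γ : ℝ → E} {P : ℝ} (hγ : IsSimpleClosedCurve γ P)
    (hrange : range γ = frontier K) {r₁ r₂ r₃ r₄ : ℝ} (h₁₂ : r₁ < r₂) (h₂₃ : r₂ < r₃)
    (h₃₄ : r₃ < r₄) (h₄₁ : r₄ < r₁ + P) :
    (segment ℝ (γ r₁) (γ r₃) ∩ segment ℝ (γ r₂) (γ r₄)).Nonempty := by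
  have : FiniteDimensional ℝ E := .of_fact_finrank_eq_two
  have hfr : ∀ r, γ r ∈ frontier K := fun r => hrange ▸ mem_range_self r
  have hγK : ∀ r, γ r ∈ K := fun r => hK.isClosed.frontier_subset (hfr r)
  have hγi : ∀ r, γ r ∉ interior K := fun r => ((hK.isClosed.frontier_eq ▸ hfr r) : _).2
  have hpy : γ r₁ ≠ γ r₃ := fun h => (h₁₂.trans h₂₃).ne
    (hγ.injOn_Ico r₁ ⟨le_rfl, by linarith⟩ ⟨by linarith, by linarith⟩ h)
  let o : Orientation ℝ E (Fin 2) := (Module.finBasisOfFinrankEq ℝ E Fact.out).orientation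
  set a := γ r₃ - γ r₁
  have ha : a ≠ 0 := sub_ne_zero.2 hpy.symm
  -- `ℓ x = ℓ (γ r₁)` is the equation of the line through `γ r₁` and `γ r₃`.
  let ℓ : E →L[ℝ] ℝ := LinearMap.toContinuousLinearMap (o.areaForm a)
  have hℓ : ℓ ≠ 0 := fun h => ha (inner_self_eq_zero.1 (by
    rw [← o.areaForm_rightAngleRotation_right]
    exact congrArg (· (o.rightAngleRotation a)) h))
  have hline : ∀ x ∈ K, ℓ x = ℓ (γ r₁) → x ∈ segment ℝ (γ r₁) (γ r₃) := fun x hx h => by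
    obtain ⟨t, ht⟩ := o.exists_eq_smul_of_areaForm_eq_zero (v := x - γ r₁) ha
      (by rw [map_sub, sub_eq_zero]; exact h)
    exact hsc.mem_segment_of_sub_eq_smul (hγK _) (hγK _) hx (hγi _) (hγi _) ht
  have h₃ : ℓ (γ r₃) = ℓ (γ r₁) := by
    rw [← sub_eq_zero, ← map_sub]
    exact o.areaForm_apply_self a
  have hpre := (convex_segment (γ r₂) (γ r₄)).isPreconnected
  obtain ⟨z, hz, hzℓ⟩ : ∃ z ∈ segment ℝ (γ r₂) (γ r₄), ℓ z = ℓ (γ r₁) := by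
    rcases le_total (ℓ (γ r₁)) (ℓ (γ r₂)) with h₂ | h₂
    · have h₄ := hγ.lt_of_le_of_forall_mem_segment hsc hK hrange h₁₂ h₂₃ h₃₄ h₄₁ hℓ hline h₃ h₂
      exact hpre.intermediate_value (right_mem_segment ℝ _ _) (left_mem_segment ℝ _ _)
        ℓ.continuous.continuousOn ⟨h₄.le, h₂⟩
    · have h₄ := hγ.lt_of_le_of_forall_mem_segment hsc hK hrange h₁₂ h₂₃ h₃₄ h₄₁
        (neg_ne_zero.2 hℓ) (fun x hx h => hline x hx (by simpa using h)) (by simp [h₃])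
        (by simpa using h₂)
      exact hpre.intermediate_value (left_mem_segment ℝ _ _) (right_mem_segment ℝ _ _)
        ℓ.continuous.continuousOn ⟨h₂, (by simpa using h₄ : ℓ (γ r₁) < ℓ (γ r₄)).le⟩
  exact ⟨z, hline z (hsc.convex.segment_subset (hγK _) (hγK _) hz) hzℓ, hz⟩

theorem IsSimpleClosedCurve.dist_lt_of_dist_le {K : Set E} (hsc : StrictConvex ℝ K)
    (hK : IsCompact K) {γ : ℝ → E} {P : ℝ} (hγ : IsSimpleClosedCurve γ P)
    (hrange : range γ = frontier K) {r₁ r₂ r₃ r₄ : ℝ} (h₁₂ : r₁ < r₂) (h₂₃ : r₂ < r₃)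
    (h₃₄ : r₃ < r₄) (h₄₁ : r₄ < r₁ + P) (h : dist (γ r₁) (γ r₃) ≤ dist (γ r₁) (γ r₄)) :
    dist (γ r₂) (γ r₃) < dist (γ r₂) (γ r₄) := by
  have hinj := hγ.injOn_Ico r₁
  by_contra! h'
  obtain ⟨z, hz, hz'⟩ := hγ.segment_inter_nonempty hsc hK hrange h₁₂ h₂₃ h₃₄ h₄₁
  have := eq_of_mem_segment_inter_of_dist_le hz hz'
    (fun h => h₁₂.ne (hinj ⟨le_rfl, by linarith⟩ ⟨h₁₂.le, by linarith⟩ h)) h h'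
  exact h₃₄.ne (hinj ⟨by linarith, by linarith⟩ ⟨by linarith, h₄₁⟩ this)

end Plane

theorem IsCompact.exists_infDist_image_eq_dist {ι E : Type*} [TopologicalSpace ι]
    [PseudoMetricSpace E] {s : Set ι} (hs : IsCompact s) (hne : s.Nonempty) {f : ι → E}
    (hf : ContinuousOn f s) (x : E) : ∃ u ∈ s, infDist x (f '' s) = dist x (f u) := by
  obtain ⟨_, ⟨u, hu, rfl⟩, h⟩ :=
    (hs.image_of_continuousOn hf).exists_infDist_eq_dist (hne.image f) x
  exact ⟨u, hu, h⟩

theorem nearestParam_le_of_lt {E : Type*} [NormedAddCommGroup E] [InnerProductSpace ℝ E]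
    [Fact (Module.finrank ℝ E = 2)] {Ω : Set E} (hΩo : IsOpen Ω) (hb : IsBounded Ω)
    (hne : Ω.Nonempty) (hsc : StrictConvex ℝ (closure Ω)) {M L : ℝ} (hM : 0 < M) (hL : 0 < L)
    {υ xp : ℝ → E} (hυc : ContinuousOn υ (Icc 0 M)) (hυi : InjOn υ (Icc 0 M))
    (hxpc : ContinuousOn xp (Icc 0 L)) (hxpi : InjOn xp (Ioo 0 L)) (hxp0 : xp 0 = υ M)
    (hxpL : xp L = υ 0) (hΥ : υ '' Icc 0 M ⊆ frontier Ω)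
    (hΓ : xp '' Ioo 0 L = frontier Ω \ υ '' Icc 0 M) {s s' u u' : ℝ} (hs : s ∈ Ioo 0 L)
    (hs' : s' ∈ Ioo 0 L) (hss' : s < s') (hu : u ∈ Icc 0 M) (hu' : u' ∈ Icc 0 M)
    (h : infDist (xp s) (υ '' Icc 0 M) = dist (xp s) (υ u))
    (h' : infDist (xp s') (υ '' Icc 0 M) = dist (xp s') (υ u')) : u' ≤ u := by
  have : FiniteDimensional ℝ E := .of_fact_finrank_eq_two
  obtain ⟨γ, hγ, hrange, hγxp, hγυ⟩ := exists_isSimpleClosedCurve_concatArc hL hM hxpc hυc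
    hxpi hυi hxpL hxp0.symm (hΓ ▸ disjoint_sdiff_left)
  have hfr : range γ = frontier (closure Ω) := hγ.range_eq_frontier_closure
    (by rw [← Module.finrank_eq_rank, Fact.out (p := Module.finrank ℝ E = 2)]; norm_num)
    hΩo hb hne hsc.convex (by rw [hrange, hΓ, sdiff_union_self, union_eq_left.2 hΥ])
  by_contra! huu
  have := hγ.dist_lt_of_dist_le hsc hb.isCompact_closure hfr (r₃ := L + u) (r₄ := L + u') hss'
    (by linarith [hs'.2, hu.1]) (by linarith) (by linarith [hu'.2, hs.1])
    (by rw [hγxp (Ioo_subset_Icc_self hs), hγυ u hu, hγυ u' hu', ← h]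
        exact infDist_le_dist_of_mem (mem_image_of_mem υ hu'))
  rw [hγxp (Ioo_subset_Icc_self hs'), hγυ u hu, hγυ u' hu', ← h'] at this
  exact this.not_ge (infDist_le_dist_of_mem (mem_image_of_mem υ hu))

/-- with `Γ` parametrized by arclength `xp : [0,L] → ∂Ω` from `a` to `b`
(the endpoints of the complementary closed arc `Υ`, whose relative interior is
`υ '' Ioo 0 M`), the sets `B_a = {s : dist(xp s, Υ) = |xp s - a|}`,
`B_b = {s : dist(xp s, Υ) = |xp s - b|}` satisfy: `sup B_a ∈ B_a`, `inf B_b ∈ B_b`, and if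
`S = {x ∈ Γ : dist(x, Υ) is realized at a point of Υ°}` is nonempty, then
`sup B_a = inf (xp⁻¹ S)` and `inf B_b = sup (xp⁻¹ S)`. -/
theorem sup_Ba_attained_and_equals_inf_S
    (Ω : Set E2) (hΩo : IsOpen Ω) (hb : IsBounded Ω) (hne : Ω.Nonempty)
    (hsc : StrictConvex ℝ (closure Ω))
    (M : ℝ) (hM : 0 < M)
    (υ : ℝ → E2) (hυc : ContinuousOn υ (Icc 0 M)) (hυi : InjOn υ (Icc 0 M))
    (Υ : Set E2) (hΥ : Υ = υ '' Icc 0 M) (hΥsub : Υ ⊆ frontier Ω)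
    (a b : E2) (ha : υ M = a) (hbb : υ 0 = b)
    (Γ : Set E2) (hΓ : Γ = frontier Ω \ Υ)
    (L : ℝ) (hL : 0 < L)
    (xp : ℝ → E2) (hxpc : ContinuousOn xp (Icc 0 L)) (hxpi : InjOn xp (Icc 0 L))
    (hxp0 : xp 0 = a) (hxpL : xp L = b) (hxpim : xp '' Ioo 0 L = Γ)
    (Ba Bb : Set ℝ)
    (hBa : Ba = {s ∈ Ioo (0:ℝ) L | infDist (xp s) Υ = dist (xp s) a})
    (hBb : Bb = {s ∈ Ioo (0:ℝ) L | infDist (xp s) Υ = dist (xp s) b})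
    (hBane : Ba.Nonempty) (hBbne : Bb.Nonempty)
    (S : Set E2)
    (hS : S = {x ∈ Γ | ∃ y ∈ υ '' Ioo 0 M, dist x y = infDist x Υ}) :
    sSup Ba ∈ Ba ∧ sInf Bb ∈ Bb ∧
      (S.Nonempty →
        sSup Ba = sInf {s ∈ Ioo (0:ℝ) L | xp s ∈ S} ∧
        sInf Bb = sSup {s ∈ Ioo (0:ℝ) L | xp s ∈ S}) := by
  subst ha hbb hΥ hΓ hS hBa hBb
  have : Fact (Module.finrank ℝ E2 = 2) := ⟨finrank_euclideanSpace_fin⟩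
  set R : ℝ → ℝ → Prop := fun s u => infDist (xp s) (υ '' Icc 0 M) = dist (xp s) (υ u)
  have hex : ∀ s ∈ Ioo 0 L, ∃ u ∈ Icc 0 M, R s u := fun s _ =>
    isCompact_Icc.exists_infDist_image_eq_dist (nonempty_Icc.2 hM.le) hυc (xp s)
  have hanti : ∀ s ∈ Ioo 0 L, ∀ s' ∈ Ioo 0 L, s < s' → ∀ u ∈ Icc 0 M, ∀ u' ∈ Icc 0 M,
      R s u → R s' u' → u' ≤ u := fun s hs s' hs' hss' u hu u' hu' =>
    nearestParam_le_of_lt hΩo hb hne hsc hM hL hυc hυi hxpc (hxpi.mono Ioo_subset_Icc_self)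
      hxp0 hxpL hΥsub hxpim hs hs' hss' hu hu'
  have hclosed : ∀ c, IsClosed (Icc 0 L ∩ {s | infDist (xp s) (υ '' Icc 0 M) = dist (xp s) c}) :=
    fun c => isClosed_Icc.inter_setOf_eq ((continuous_infDist_pt _).comp_continuousOn hxpc)
      ((continuous_id.dist continuous_const).comp_continuousOn hxpc)
  have hυM0 : dist (υ M) (υ 0) ≠ 0 := fun h =>
    hM.ne' (hυi ⟨hM.le, le_rfl⟩ ⟨le_rfl, hM.le⟩ (dist_eq_zero.1 h))
  have hσ := csSup_Ioo_inter_mem (hclosed _) hBane fun h => hυM0 <| by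
    rw [mem_ofPred_eq, hxpL, infDist_zero_of_mem (mem_image_of_mem υ (left_mem_Icc.2 hM.le))] at h
    rw [dist_comm, ← h]
  have hτ := csInf_Ioo_inter_mem (hclosed _) hBbne fun h => hυM0 <| by
    rw [mem_ofPred_eq, hxp0, infDist_zero_of_mem (mem_image_of_mem υ (right_mem_Icc.2 hM.le))] at h
    rw [← h]
  have hT : {s ∈ Ioo 0 L | xp s ∈ {x ∈ frontier Ω \ υ '' Icc 0 M |
      ∃ y ∈ υ '' Ioo 0 M, dist x y = infDist x (υ '' Icc 0 M)}} =
      {s ∈ Ioo 0 L | ∃ u ∈ Ioo 0 M, R s u} := by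
    ext s
    refine and_congr_right fun hs => ?_
    simpa [← hxpim, R, eq_comm] using fun _ _ _ _ => ⟨s, hs, rfl⟩
  refine ⟨hσ, hτ, fun ⟨_, hxΓ, hxS⟩ => ?_⟩
  obtain ⟨s, hs, rfl⟩ := hxpim ▸ hxΓ
  have hTne : {s ∈ Ioo 0 L | ∃ u ∈ Ioo 0 M, R s u}.Nonempty := hT ▸ ⟨s, hs, hxΓ, hxS⟩
  rw [hT]
  exact ⟨csSup_eq_csInf_of_antitone ordConnected_Ioo bddAbove_Ioo bddBelow_Ioo hex hanti hσ hTne,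
    csInf_eq_csSup_of_antitone ordConnected_Ioo bddAbove_Ioo bddBelow_Ioo hex hanti hτ hTne⟩

end
end
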